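/- arXiv:2508.21013 — 3 statements merged into one kernel-verified Lean document; each statement's English description precedes it below -/
import Mathlib

section
/- Let H1 = r0·I + ∑ r_i σ_i with r0,...,r3 real, let P = (p1,p2,p3) ≠ 0, and let e be a unit eigenvector of H0 = p0·I + ∑ p_i σ_i with eigenvalue p0 ± ‖P‖. Then ⟨H1 e, e⟩ = r0 ± (r1 p1 + r2 p2 + r3 p3)/‖P‖. -/
open Complex Matrix

noncomputable def dotc (v w : Fin 2 → ℂ) : ℂ :=
  ∑ i, v i * starRingEnd ℂ (w i)

noncomputable def pauli : Fin 3 → Matrix (Fin 2) (Fin 2) ℂ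
  | 0 => !![0, 1; 1, 0]
  | 1 => !![0, -I; I, 0]
  | 2 => !![1, 0; 0, -1]

noncomputable def Hmat (a0 : ℝ) (a : Fin 3 → ℝ) : Matrix (Fin 2) (Fin 2) ℂ :=
  (a0 : ℂ) • (1 : Matrix (Fin 2) (Fin 2) ℂ) + ∑ i, (a i : ℂ) • pauli i

/-!
The matrices `pauliDot a = ∑ aᵢ σᵢ` satisfy the anticommutation relation
`pauliDot a * pauliDot b + pauliDot b * pauliDot a = 2 (a ⬝ᵥ b) • 1`. Take its expectation in the
unit eigenvector `e` of the Hermitian matrix `pauliDot p`, with eigenvalue `ε ‖p‖`: each of the two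
products contributes `ε ‖p‖ ⟨pauliDot r e, e⟩`, so `ε ‖p‖ ⟨pauliDot r e, e⟩ = p ⬝ᵥ r`, and since
`ε² = 1` this gives `⟨pauliDot r e, e⟩ = ε (p ⬝ᵥ r) / ‖p‖`.
-/

namespace Matrix

variable {n 𝕜 : Type*} [Fintype n] [RCLike 𝕜]

theorem IsHermitian.mulVec_dotProduct_star {A : Matrix n n 𝕜} (hA : A.IsHermitian)
    (v w : n → 𝕜) : (A *ᵥ v) ⬝ᵥ star w = v ⬝ᵥ star (A *ᵥ w) := by
  rw [star_mulVec, hA.eq, dotProduct_comm, dotProduct_mulVec, dotProduct_comm]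

theorem IsHermitian.anticomm_mulVec_dotProduct_star {A : Matrix n n 𝕜} (hA : A.IsHermitian)
    (B : Matrix n n 𝕜) {μ : ℝ} {v : n → 𝕜} (hv : A *ᵥ v = (μ : 𝕜) • v) :
    ((A * B + B * A) *ᵥ v) ⬝ᵥ star v = 2 * μ * ((B *ᵥ v) ⬝ᵥ star v) := by
  rw [add_mulVec, add_dotProduct, ← mulVec_mulVec, ← mulVec_mulVec, hA.mulVec_dotProduct_star,
    hv, mulVec_smul, star_smul, smul_dotProduct, dotProduct_smul, RCLike.star_def,
    RCLike.conj_ofReal, smul_eq_mul]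
  ring

end Matrix

noncomputable def pauliDot (a : Fin 3 → ℝ) : Matrix (Fin 2) (Fin 2) ℂ :=
  ∑ i, (a i : ℂ) • pauli i

theorem Hmat_eq_smul_one_add_pauliDot (a0 : ℝ) (a : Fin 3 → ℝ) :
    Hmat a0 a = (a0 : ℂ) • 1 + pauliDot a :=
  rfl

theorem isHermitian_pauli (i : Fin 3) : (pauli i).IsHermitian := by
  fin_cases i <;> ext j k <;> fin_cases j <;> fin_cases k <;> simp [pauli]

theorem isHermitian_pauliDot (a : Fin 3 → ℝ) : (pauliDot a).IsHermitian :=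
  isSelfAdjoint_sum _ fun i _ => (isHermitian_pauli i).smul (Complex.conj_ofReal _)

theorem pauliDot_anticomm (a b : Fin 3 → ℝ) :
    pauliDot a * pauliDot b + pauliDot b * pauliDot a = ((2 * (a ⬝ᵥ b) : ℝ) : ℂ) • 1 := by
  ext j k
  fin_cases j <;> fin_cases k <;>
    simp [pauliDot, pauli, Fin.sum_univ_three, dotProduct] <;> ring_nf <;> simp

theorem dotc_eq_dotProduct_star (v w : Fin 2 → ℂ) : dotc v w = v ⬝ᵥ star w :=
  rfl

theorem sum_sq_fin_three_pos {p : Fin 3 → ℝ} (hp : p ≠ 0) : 0 < p 0 ^ 2 + p 1 ^ 2 + p 2 ^ 2 := by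
  obtain ⟨i, hi⟩ := Function.ne_iff.mp hp
  fin_cases i <;> simp only [Pi.zero_apply, Fin.zero_eta, Fin.mk_one, Fin.reduceFinMk] at hi <;>
    positivity

theorem subprincipal_expectation (p0 r0 : ℝ) (p r : Fin 3 → ℝ) (hP : p ≠ 0)
    (ε : ℝ) (hε : ε = 1 ∨ ε = -1) (e : Fin 2 → ℂ) (he : dotc e e = 1)
    (heig : (Hmat p0 p).mulVec e =
      ((p0 + ε * Real.sqrt (p 0 ^ 2 + p 1 ^ 2 + p 2 ^ 2) : ℝ) : ℂ) • e) :
    dotc ((Hmat r0 r).mulVec e) e =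
      ((r0 + ε * (r 0 * p 0 + r 1 * p 1 + r 2 * p 2) /
          Real.sqrt (p 0 ^ 2 + p 1 ^ 2 + p 2 ^ 2) : ℝ) : ℂ) := by
  set s := Real.sqrt (p 0 ^ 2 + p 1 ^ 2 + p 2 ^ 2)
  have hs : (s : ℂ) ≠ 0 := ofReal_ne_zero.mpr (Real.sqrt_pos.mpr (sum_sq_fin_three_pos hP)).ne'
  have hε2 : (ε : ℂ) ^ 2 = 1 := by rcases hε with rfl | rfl <;> norm_num
  have heig' : pauliDot p *ᵥ e = ((ε * s : ℝ) : ℂ) • e := by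
    rw [Hmat_eq_smul_one_add_pauliDot, add_mulVec, smul_mulVec, one_mulVec, ofReal_add,
      add_smul] at heig
    exact add_left_cancel heig
  have key := (isHermitian_pauliDot p).anticomm_mulVec_dotProduct_star (pauliDot r) (μ := ε * s) heig'
  rw [pauliDot_anticomm, smul_mulVec, one_mulVec, smul_dotProduct, ← dotc_eq_dotProduct_star,
    he, smul_eq_mul, mul_one] at key
  have hr : (pauliDot r *ᵥ e) ⬝ᵥ star e = ((ε * (p ⬝ᵥ r) / s : ℝ) : ℂ) := by
    push_cast at key ⊢
    rw [eq_div_iff hs]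
    linear_combination -(ε : ℂ) / 2 * key - (pauliDot r *ᵥ e ⬝ᵥ star e) * s * hε2
  rw [dotc_eq_dotProduct_star, Hmat_eq_smul_one_add_pauliDot, add_mulVec, smul_mulVec, one_mulVec,
    add_dotProduct, smul_dotProduct, ← dotc_eq_dotProduct_star, he, hr]
  simp [dotProduct, Fin.sum_univ_three]
  ring
end

section
/- Let m : ℝ → ℝ be continuous with m(x) > 0 for x > 0, m(x) < 0 for x < 0 (e.g., m odd and strictly increasing with m(0) = 0). Then the closed curve Γ(t) = sin t + i·m(cos t), t ∈ [0, 2π], avoids the origin and has winding number −1 around 0 in ℂ. -/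
/-!
`Γ` vanishes only if `sin t = 0`, i.e. `cos t = ±1`, where `m (cos t) ≠ 0` by the sign condition.
On `[0, π]` the curve stays in the closed right half-plane `Re Γ = sin t ≥ 0`, hence in the slit
plane, so the principal argument `arg ∘ Γ` is continuous there; on `[π, 2π]` the same holds for
`-Γ`, and `arg (-Γ t) - π` is an argument of `Γ t`. The two branches agree at `t = π`, where
`Γ π = m(-1) i` lies on the negative imaginary axis. The glued argument runs from
`arg (m(1) i) = π/2` down to `arg (-m(1) i) - π = -3π/2`, a change of `-2π`.
-/

open Complex Real

namespace Complex

lemma mem_slitPlane_of_re_nonneg {z : ℂ} (hre : 0 ≤ z.re) (hz : z ≠ 0) : z ∈ slitPlane := by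
  rw [mem_slitPlane_iff]
  rcases hre.lt_or_eq with hpos | hzero
  · exact .inl hpos
  · exact .inr fun him => hz (Complex.ext hzero.symm him)

noncomputable def argSplitAt (f : ℝ → ℂ) (c t : ℝ) : ℝ :=
  if t ≤ c then arg (f t) else arg (-f t) - π

lemma norm_mul_exp_argSplitAt (f : ℝ → ℂ) (c t : ℝ) :
    (‖f t‖ : ℂ) * exp (argSplitAt f c t * I) = f t := by
  unfold argSplitAt
  split_ifs
  · exact norm_mul_exp_arg_mul_I (f t)
  · have hexp : exp (((arg (-f t) - π : ℝ) : ℂ) * I) = -exp (arg (-f t) * I) := by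
      push_cast
      rw [sub_mul, exp_sub, exp_pi_mul_I, div_neg, div_one]
    rw [hexp, ← norm_neg (f t), mul_neg, norm_mul_exp_arg_mul_I, neg_neg]

lemma continuousOn_argSplitAt {f : ℝ → ℂ} {a b c : ℝ} (hac : a ≤ c) (hcb : c ≤ b)
    (hf : ContinuousOn f (Set.Icc a b))
    (hleft : ∀ t ∈ Set.Icc a c, f t ∈ slitPlane)
    (hright : ∀ t ∈ Set.Icc c b, -f t ∈ slitPlane) (hc : (f c).im < 0) :
    ContinuousOn (argSplitAt f c) (Set.Icc a b) := by
  have hleft_eq : Set.EqOn (argSplitAt f c) (fun t => arg (f t)) (Set.Icc a c) :=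
    fun t ht => if_pos ht.2
  have hright_eq : Set.EqOn (argSplitAt f c) (fun t => arg (-f t) - π) (Set.Icc c b) := by
    intro t ht
    rcases ht.1.eq_or_lt with rfl | hct
    · show argSplitAt f c c = arg (-f c) - π
      rw [argSplitAt, if_pos le_rfl, arg_neg_eq_arg_add_pi_of_im_neg hc, add_sub_cancel_right]
    · exact if_neg hct.not_ge
  have hleft_cont : ContinuousOn (fun t => arg (f t)) (Set.Icc a c) := fun t ht =>
    (continuousAt_arg (hleft t ht)).comp_continuousWithinAt
      ((hf t ⟨ht.1, ht.2.trans hcb⟩).mono (Set.Icc_subset_Icc_right hcb))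
  have hright_cont : ContinuousOn (fun t => arg (-f t) - π) (Set.Icc c b) := fun t ht =>
    ((continuousAt_arg (hright t ht)).comp_continuousWithinAt (f := fun s => -f s)
      ((hf t ⟨hac.trans ht.1, ht.2⟩).mono (Set.Icc_subset_Icc_left hac)).neg).sub
      continuousWithinAt_const
  rw [← Set.Icc_union_Icc_eq_Icc hac hcb]
  exact (hleft_cont.congr hleft_eq).union_of_isClosed (hright_cont.congr hright_eq)
    isClosed_Icc isClosed_Icc

end Complex

namespace JackiwRebbi

noncomputable def curve (m : ℝ → ℝ) (t : ℝ) : ℂ := (Real.sin t : ℂ) + (m (Real.cos t) : ℂ) * I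

variable {m : ℝ → ℝ}

@[simp] lemma curve_re (t : ℝ) : (curve m t).re = Real.sin t := by simp [curve, -ofReal_sin]

@[simp] lemma curve_im (t : ℝ) : (curve m t).im = m (Real.cos t) := by simp [curve]

lemma continuous_curve (hm : Continuous m) : Continuous (curve m) := by
  unfold curve; fun_prop

lemma curve_ne_zero (hm_one : 0 < m 1) (hm_neg_one : m (-1) < 0) (t : ℝ) : curve m t ≠ 0 := by
  intro h
  have hsin : Real.sin t = 0 := by simpa using congrArg re h
  have hm : m (Real.cos t) = 0 := by simpa using congrArg im h
  rcases sin_eq_zero_iff_cos_eq.1 hsin with hcos | hcos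
  · rw [hcos] at hm; exact hm_one.ne' hm
  · rw [hcos] at hm; exact hm_neg_one.ne hm

lemma curve_zero : curve m 0 = m 1 * I := by simp [curve]

lemma curve_two_pi : curve m (2 * π) = m 1 * I := by simp [curve]

end JackiwRebbi

open JackiwRebbi

/-- The curve `Γ(t) = sin t + i·m(cos t)` avoids the origin, and its winding number
around `0` is `-1`: any (indeed, some) continuous argument function `arg` along `Γ`
on `[0, 2π]` changes by `-2π`. -/
theorem jackiw_rebbi_winding
    (m : ℝ → ℝ) (hm : Continuous m)
    (hpos : ∀ x > (0 : ℝ), m x > 0) (hneg : ∀ x < (0 : ℝ), m x < 0)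
    (Γ : ℝ → ℂ) (hΓ : Γ = fun t => (Real.sin t : ℂ) + (m (Real.cos t) : ℂ) * I) :
    (∀ t ∈ Set.Icc (0 : ℝ) (2 * π), Γ t ≠ 0) ∧
    ∃ a : ℝ → ℝ, ContinuousOn a (Set.Icc (0 : ℝ) (2 * π)) ∧
      (∀ t ∈ Set.Icc (0 : ℝ) (2 * π),
        Γ t = (‖Γ t‖ : ℂ) * Complex.exp ((a t : ℂ) * I)) ∧
      a (2 * π) - a 0 = 2 * π * (-1) := by
  obtain rfl : Γ = curve m := hΓ
  have hm_one : 0 < m 1 := hpos 1 one_pos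
  have hm_neg_one : m (-1) < 0 := hneg (-1) neg_one_lt_zero
  have hne := curve_ne_zero hm_one hm_neg_one
  refine ⟨fun t _ => hne t, argSplitAt (curve m) π, ?_,
    fun t _ => (norm_mul_exp_argSplitAt _ π t).symm, ?_⟩
  · refine continuousOn_argSplitAt pi_pos.le (by linarith [pi_pos])
      (continuous_curve hm).continuousOn
      (fun t ht => mem_slitPlane_of_re_nonneg ?_ (hne t))
      (fun t ht => mem_slitPlane_of_re_nonneg ?_ (neg_ne_zero.2 (hne t)))
      (by simpa using hm_neg_one)
    · simpa using sin_nonneg_of_nonneg_of_le_pi ht.1 ht.2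
    · have h := sin_nonpos_of_nonpos_of_neg_pi_le (x := t - 2 * π) (by linarith [ht.2])
        (by linarith [ht.1])
      simpa [Real.sin_sub_two_pi] using h
  · have ha0 : argSplitAt (curve m) π 0 = π / 2 := by
      rw [argSplitAt, if_pos pi_pos.le, curve_zero, arg_real_mul I hm_one, arg_I]
    have ha2π : argSplitAt (curve m) π (2 * π) = -(π / 2) - π := by
      rw [argSplitAt, if_neg (by linarith [pi_pos]), curve_two_pi, ← mul_neg,
        arg_real_mul _ hm_one, arg_neg_I]
    rw [ha0, ha2π]
    ring
end

section
/- Let U₀(x,ξ) be a smooth family of unitary 2×2 matrices whose first column is a unit eigenvector e(x,ξ) of a smooth Hermitian family H0(x,ξ) with eigenvalue μ(x,ξ), and let H1(x,ξ) be Hermitian. Then the (1,1) entry of U₀* H1 U₀ equals ⟨H1 e, e⟩, and the (1,1) entry of (1/2i)(U₀*{H0, U₀} + {U₀*, H0 U₀}) equals (1/2i)⟨{H0 − μ, e}, e⟩ + (1/i)⟨{μ, e}, e⟩ + μ·Im⟨∂ₓe, ∂_ξe⟩, where {A,B} = ∂_ξA·∂ₓB − ∂ₓA·∂_ξB. -/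
open Complex Matrix

attribute [local instance] Matrix.normedAddCommGroup Matrix.normedSpace

noncomputable def entryCLM (i j : Fin 2) : Matrix (Fin 2) (Fin 2) ℂ →L[ℝ] ℂ :=
  LinearMap.toContinuousLinearMap
    { toFun := fun M => M i j
      map_add' := fun _ _ => rfl
      map_smul' := fun _ _ => rfl }

noncomputable def compCLM (i : Fin 2) : (Fin 2 → ℂ) →L[ℝ] ℂ :=
  LinearMap.toContinuousLinearMap
    { toFun := fun v => v i
      map_add' := fun _ _ => rfl
      map_smul' := fun _ _ => rfl }

noncomputable def ctCLM : Matrix (Fin 2) (Fin 2) ℂ →L[ℝ] Matrix (Fin 2) (Fin 2) ℂ :=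
  LinearMap.toContinuousLinearMap
    { toFun := fun M => Mᴴ
      map_add' := fun _ _ => Matrix.conjTranspose_add _ _
      map_smul' := fun r M => by
        ext i j
        simp [Matrix.conjTranspose_apply, Matrix.smul_apply, Complex.real_smul] }

noncomputable def smul1CLM : ℂ →L[ℝ] Matrix (Fin 2) (Fin 2) ℂ :=
  LinearMap.toContinuousLinearMap
    { toFun := fun z => z • (1 : Matrix (Fin 2) (Fin 2) ℂ)
      map_add' := fun _ _ => add_smul _ _ _
      map_smul' := fun r z => by
        ext i j
        simp [Matrix.smul_apply, Complex.real_smul]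
        ring }

lemma fderiv_entry (A : ℝ × ℝ → Matrix (Fin 2) (Fin 2) ℂ) (p : ℝ × ℝ)
    (hA : DifferentiableAt ℝ A p) (i j : Fin 2) (v : ℝ × ℝ) :
    fderiv ℝ (fun q => A q i j) p v = fderiv ℝ A p v i j := by
  have h := ((entryCLM i j).hasFDerivAt.comp p hA.hasFDerivAt).fderiv
  have h2 : (fun q => A q i j) = (entryCLM i j) ∘ A := rfl
  rw [h2, h]; rfl

lemma fderiv_vcomp (e : ℝ × ℝ → (Fin 2 → ℂ)) (p : ℝ × ℝ)
    (he : DifferentiableAt ℝ e p) (i : Fin 2) (v : ℝ × ℝ) :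
    fderiv ℝ (fun q => e q i) p v = fderiv ℝ e p v i := by
  have h := ((compCLM i).hasFDerivAt.comp p he.hasFDerivAt).fderiv
  have h2 : (fun q => e q i) = (compCLM i) ∘ e := rfl
  rw [h2, h]; rfl

lemma diff_entry (A : ℝ × ℝ → Matrix (Fin 2) (Fin 2) ℂ) (p : ℝ × ℝ)
    (hA : DifferentiableAt ℝ A p) (i j : Fin 2) :
    DifferentiableAt ℝ (fun q => A q i j) p :=
  ((entryCLM i j).differentiable.differentiableAt).comp p hA

lemma diff_vcomp (e : ℝ × ℝ → (Fin 2 → ℂ)) (p : ℝ × ℝ)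
    (he : DifferentiableAt ℝ e p) (i : Fin 2) :
    DifferentiableAt ℝ (fun q => e q i) p :=
  ((compCLM i).differentiable.differentiableAt).comp p he

lemma fderiv_ct (U : ℝ × ℝ → Matrix (Fin 2) (Fin 2) ℂ) (p : ℝ × ℝ)
    (hU : DifferentiableAt ℝ U p) (v : ℝ × ℝ) :
    fderiv ℝ (fun q => (U q)ᴴ) p v = (fderiv ℝ U p v)ᴴ := by
  have h := (ctCLM.hasFDerivAt.comp p hU.hasFDerivAt).fderiv
  have h2 : (fun q => (U q)ᴴ) = ctCLM ∘ U := rfl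
  rw [h2]; exact DFunLike.congr_fun h v

lemma diff_ct (U : ℝ × ℝ → Matrix (Fin 2) (Fin 2) ℂ) (p : ℝ × ℝ)
    (hU : DifferentiableAt ℝ U p) :
    DifferentiableAt ℝ (fun q => (U q)ᴴ) p :=
  (ctCLM.differentiable.differentiableAt).comp p hU

lemma fderiv_conj' (f : ℝ × ℝ → ℂ) (p : ℝ × ℝ) (hf : DifferentiableAt ℝ f p) (v : ℝ × ℝ) :
    fderiv ℝ (fun q => starRingEnd ℂ (f q)) p v = starRingEnd ℂ (fderiv ℝ f p v) := by
  have h := ((Complex.conjCLE.toContinuousLinearMap).hasFDerivAt.comp p hf.hasFDerivAt).fderiv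
  have h2 : (fun q => starRingEnd ℂ (f q)) = (Complex.conjCLE.toContinuousLinearMap : ℂ →L[ℝ] ℂ) ∘ f := rfl
  rw [h2, h]; rfl

lemma diff_conj' (f : ℝ × ℝ → ℂ) (p : ℝ × ℝ) (hf : DifferentiableAt ℝ f p) :
    DifferentiableAt ℝ (fun q => starRingEnd ℂ (f q)) p :=
  ((Complex.conjCLE.toContinuousLinearMap).differentiable.differentiableAt).comp p hf

lemma fderiv_ofReal' (f : ℝ × ℝ → ℝ) (p : ℝ × ℝ) (hf : DifferentiableAt ℝ f p) (v : ℝ × ℝ) :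
    fderiv ℝ (fun q => ((f q : ℝ) : ℂ)) p v = ((fderiv ℝ f p v : ℝ) : ℂ) := by
  have h := (Complex.ofRealCLM.hasFDerivAt.comp p hf.hasFDerivAt).fderiv
  have h2 : (fun q => ((f q : ℝ) : ℂ)) = Complex.ofRealCLM ∘ f := rfl
  rw [h2, h]; rfl

lemma diff_ofReal' (f : ℝ × ℝ → ℝ) (p : ℝ × ℝ) (hf : DifferentiableAt ℝ f p) :
    DifferentiableAt ℝ (fun q => ((f q : ℝ) : ℂ)) p :=
  (Complex.ofRealCLM.differentiable.differentiableAt).comp p hf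

lemma fderiv_mul_apply {f g : ℝ × ℝ → ℂ} {p : ℝ × ℝ} (hf : DifferentiableAt ℝ f p)
    (hg : DifferentiableAt ℝ g p) (v : ℝ × ℝ) :
    fderiv ℝ (fun q => f q * g q) p v
      = f p * fderiv ℝ g p v + g p * fderiv ℝ f p v := by
  rw [fderiv_fun_mul hf hg]; simp

lemma fderiv_add_apply' {f g : ℝ × ℝ → ℂ} {p : ℝ × ℝ} (hf : DifferentiableAt ℝ f p)
    (hg : DifferentiableAt ℝ g p) (v : ℝ × ℝ) :
    fderiv ℝ (fun q => f q + g q) p v = fderiv ℝ f p v + fderiv ℝ g p v := by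
  rw [fderiv_fun_add hf hg]; simp

/-- Poisson bracket `{A,B} = ∂_ξ A · ∂ₓ B − ∂ₓ A · ∂_ξ B` of two matrix-valued
families (matrix multiplication). -/
noncomputable def pbMM (A B : ℝ × ℝ → Matrix (Fin 2) (Fin 2) ℂ) (p : ℝ × ℝ) :
    Matrix (Fin 2) (Fin 2) ℂ :=
  fderiv ℝ A p (0, 1) * fderiv ℝ B p (1, 0) - fderiv ℝ A p (1, 0) * fderiv ℝ B p (0, 1)

/-- Poisson bracket of a matrix-valued family with a vector-valued family. -/
noncomputable def pbMV (A : ℝ × ℝ → Matrix (Fin 2) (Fin 2) ℂ)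
    (v : ℝ × ℝ → (Fin 2 → ℂ)) (p : ℝ × ℝ) : Fin 2 → ℂ :=
  (fderiv ℝ A p (0, 1)).mulVec (fderiv ℝ v p (1, 0)) -
    (fderiv ℝ A p (1, 0)).mulVec (fderiv ℝ v p (0, 1))

/-- Poisson bracket of a scalar family with a vector-valued family. -/
noncomputable def pbSV (f : ℝ × ℝ → ℝ) (v : ℝ × ℝ → (Fin 2 → ℂ)) (p : ℝ × ℝ) :
    Fin 2 → ℂ :=
  fderiv ℝ f p (0, 1) • fderiv ℝ v p (1, 0) - fderiv ℝ f p (1, 0) • fderiv ℝ v p (0, 1)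

theorem subprincipal_symbol_decomposition
    (U₀ H0 H1 : ℝ × ℝ → Matrix (Fin 2) (Fin 2) ℂ)
    (μ : ℝ × ℝ → ℝ) (e : ℝ × ℝ → (Fin 2 → ℂ))
    (hU₀ : ContDiff ℝ (⊤ : ℕ∞) U₀) (hH0 : ContDiff ℝ (⊤ : ℕ∞) H0) (hH1 : ContDiff ℝ (⊤ : ℕ∞) H1)
    (hμ : ContDiff ℝ (⊤ : ℕ∞) μ) (he : ContDiff ℝ (⊤ : ℕ∞) e)
    (hunitary : ∀ p, (U₀ p)ᴴ * U₀ p = 1 ∧ U₀ p * (U₀ p)ᴴ = 1)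
    (hcol : ∀ p, (fun i => U₀ p i 0) = e p)
    (hherm0 : ∀ p, (H0 p).IsHermitian) (hherm1 : ∀ p, (H1 p).IsHermitian)
    (heig : ∀ p, (H0 p).mulVec (e p) = (μ p : ℂ) • e p)
    (hnorm : ∀ p, dotc (e p) (e p) = 1) (p : ℝ × ℝ) :
    ((U₀ p)ᴴ * H1 p * U₀ p) 0 0 = dotc ((H1 p).mulVec (e p)) (e p) ∧
    (1 / (2 * I)) *
        (((U₀ p)ᴴ * pbMM H0 U₀ p +
          pbMM (fun q => (U₀ q)ᴴ) (fun q => H0 q * U₀ q) p) 0 0) =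
      (1 / (2 * I)) *
          dotc (pbMV (fun q => H0 q - (μ q : ℂ) • (1 : Matrix (Fin 2) (Fin 2) ℂ)) e p)
            (e p) +
        (1 / I) * dotc (pbSV μ e p) (e p) +
        (μ p : ℂ) * ((dotc (fderiv ℝ e p (1, 0)) (fderiv ℝ e p (0, 1))).im : ℂ) := by
  have hUd : DifferentiableAt ℝ U₀ p := (hU₀.differentiable (by simp)).differentiableAt
  have hH0d : DifferentiableAt ℝ H0 p := (hH0.differentiable (by simp)).differentiableAt
  have hed : DifferentiableAt ℝ e p := (he.differentiable (by simp)).differentiableAt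
  have hμd : DifferentiableAt ℝ μ p := (hμ.differentiable (by simp)).differentiableAt
  have hc : ∀ q (i : Fin 2), U₀ q i 0 = e q i := fun q i => congrFun (hcol q) i
  have hHe : ∀ i j, DifferentiableAt ℝ (fun q => H0 q i j) p := fun i j => diff_entry _ _ hH0d i j
  have hee : ∀ i, DifferentiableAt ℝ (fun q => e q i) p := fun i => diff_vcomp _ _ hed i
  have hce : ∀ i, DifferentiableAt ℝ (fun q => starRingEnd ℂ (e q i)) p :=
    fun i => diff_conj' _ _ (hee i)
  have hCμ : DifferentiableAt ℝ (fun q => ((μ q : ℝ) : ℂ)) p := diff_ofReal' _ _ hμd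
  constructor
  · simp only [Matrix.mul_apply, Matrix.mulVec, dotProduct, dotc, Fin.sum_univ_two,
      Matrix.conjTranspose_apply, hc, RCLike.star_def]
    ring
  have hUcol : ∀ (v : ℝ × ℝ) (j : Fin 2), fderiv ℝ U₀ p v j 0 = fderiv ℝ e p v j := by
    intro v j
    rw [← fderiv_entry U₀ p hUd j 0 v]
    have h2 : (fun q => U₀ q j 0) = fun q => e q j := funext fun q => hc q j
    rw [h2, fderiv_vcomp e p hed j v]
  have hUH : ∀ (v : ℝ × ℝ) (k : Fin 2),
      fderiv ℝ (fun q => (U₀ q)ᴴ) p v 0 k = starRingEnd ℂ (fderiv ℝ e p v k) := by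
    intro v k
    rw [fderiv_ct U₀ p hUd v]
    simp [Matrix.conjTranspose_apply, hUcol v k, RCLike.star_def]
  have hHUd : DifferentiableAt ℝ (fun q => H0 q * U₀ q) p := by
    apply differentiableAt_pi.2
    intro i
    apply differentiableAt_pi.2
    intro j
    have h2 : (fun q => (H0 q * U₀ q) i j) = fun q => H0 q i 0 * U₀ q 0 j + H0 q i 1 * U₀ q 1 j := by
      funext q; simp [Matrix.mul_apply, Fin.sum_univ_two]
    rw [h2]
    exact ((hHe i 0).mul (diff_entry _ _ hUd 0 j)).add ((hHe i 1).mul (diff_entry _ _ hUd 1 j))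
  have hHUv : ∀ (v : ℝ × ℝ) (k : Fin 2), fderiv ℝ (fun q => H0 q * U₀ q) p v k 0 =
      fderiv ℝ H0 p v k 0 * e p 0 + H0 p k 0 * fderiv ℝ e p v 0 +
        (fderiv ℝ H0 p v k 1 * e p 1 + H0 p k 1 * fderiv ℝ e p v 1) := by
    intro v k
    rw [← fderiv_entry _ p hHUd k 0 v]
    have h2 : (fun q => (H0 q * U₀ q) k 0) = fun q => H0 q k 0 * e q 0 + H0 q k 1 * e q 1 := by
      funext q; simp [Matrix.mul_apply, Fin.sum_univ_two, hc]
    rw [h2, fderiv_add_apply' ((hHe k 0).fun_mul (hee 0)) ((hHe k 1).fun_mul (hee 1)) v,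
      fderiv_mul_apply (hHe k 0) (hee 0) v, fderiv_mul_apply (hHe k 1) (hee 1) v,
      fderiv_entry H0 p hH0d k 0 v, fderiv_entry H0 p hH0d k 1 v,
      fderiv_vcomp e p hed 0 v, fderiv_vcomp e p hed 1 v]
    ring
  have hmu1d : DifferentiableAt ℝ (fun q => ((μ q : ℂ)) • (1 : Matrix (Fin 2) (Fin 2) ℂ)) p := by
    have h2 : (fun q => ((μ q : ℂ)) • (1 : Matrix (Fin 2) (Fin 2) ℂ))
        = smul1CLM ∘ (fun q => ((μ q : ℝ) : ℂ)) := rfl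
    rw [h2]; exact (smul1CLM.differentiable.differentiableAt).comp p hCμ
  have hHmu : ∀ (v : ℝ × ℝ) (i j : Fin 2),
      fderiv ℝ (fun q => H0 q - (μ q : ℂ) • (1 : Matrix (Fin 2) (Fin 2) ℂ)) p v i j
        = fderiv ℝ H0 p v i j
          - ((fderiv ℝ μ p v : ℝ) : ℂ) * (1 : Matrix (Fin 2) (Fin 2) ℂ) i j := by
    intro v i j
    have hs : fderiv ℝ (fun q => ((μ q : ℂ)) • (1 : Matrix (Fin 2) (Fin 2) ℂ)) p v
        = ((fderiv ℝ μ p v : ℝ) : ℂ) • (1 : Matrix (Fin 2) (Fin 2) ℂ) := by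
      have h := (smul1CLM.hasFDerivAt.comp p hCμ.hasFDerivAt).fderiv
      have h2 : (fun q => ((μ q : ℂ)) • (1 : Matrix (Fin 2) (Fin 2) ℂ))
          = smul1CLM ∘ (fun q => ((μ q : ℝ) : ℂ)) := rfl
      rw [h2]; refine (DFunLike.congr_fun h v).trans ?_
      show smul1CLM (fderiv ℝ (fun q => ((μ q : ℝ) : ℂ)) p v) = _
      rw [fderiv_ofReal' μ p hμd v]; rfl
    have hsub : fderiv ℝ (fun q => H0 q - (μ q : ℂ) • (1 : Matrix (Fin 2) (Fin 2) ℂ)) p v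
        = fderiv ℝ H0 p v - ((fderiv ℝ μ p v : ℝ) : ℂ) • (1 : Matrix (Fin 2) (Fin 2) ℂ) := by
      exact (DFunLike.congr_fun (fderiv_fun_sub hH0d hmu1d) v).trans
        (congrArg (fun M => fderiv ℝ H0 p v - M) hs)
    refine (congrFun (congrFun hsub i) j).trans ?_
    simp [Matrix.sub_apply, Matrix.smul_apply, smul_eq_mul]
  have hEig : ∀ (v : ℝ × ℝ) (i : Fin 2),
      fderiv ℝ H0 p v i 0 * e p 0 + H0 p i 0 * fderiv ℝ e p v 0 +
        (fderiv ℝ H0 p v i 1 * e p 1 + H0 p i 1 * fderiv ℝ e p v 1)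
        = ((fderiv ℝ μ p v : ℝ) : ℂ) * e p i + (μ p : ℂ) * fderiv ℝ e p v i := by
    intro v i
    have hfg : (fun q => H0 q i 0 * e q 0 + H0 q i 1 * e q 1)
        = (fun q => ((μ q : ℝ) : ℂ) * e q i) := by
      funext q
      have h := congrFun (heig q) i
      simpa [Matrix.mulVec, dotProduct, Fin.sum_univ_two, Pi.smul_apply,
        smul_eq_mul] using h
    have h2 : fderiv ℝ (fun q => H0 q i 0 * e q 0 + H0 q i 1 * e q 1) p v
        = fderiv ℝ (fun q => ((μ q : ℝ) : ℂ) * e q i) p v := by rw [hfg]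
    rw [fderiv_add_apply' ((hHe i 0).fun_mul (hee 0)) ((hHe i 1).fun_mul (hee 1)) v,
      fderiv_mul_apply (hHe i 0) (hee 0) v, fderiv_mul_apply (hHe i 1) (hee 1) v,
      fderiv_entry H0 p hH0d i 0 v, fderiv_entry H0 p hH0d i 1 v,
      fderiv_vcomp e p hed 0 v, fderiv_vcomp e p hed 1 v,
      fderiv_mul_apply hCμ (hee i) v, fderiv_ofReal' μ p hμd v,
      fderiv_vcomp e p hed i v] at h2
    linear_combination h2
  have hNorm : ∀ v : ℝ × ℝ,
      fderiv ℝ e p v 0 * starRingEnd ℂ (e p 0) + e p 0 * starRingEnd ℂ (fderiv ℝ e p v 0)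
      + (fderiv ℝ e p v 1 * starRingEnd ℂ (e p 1)
        + e p 1 * starRingEnd ℂ (fderiv ℝ e p v 1)) = 0 := by
    intro v
    have hfun : (fun q => e q 0 * starRingEnd ℂ (e q 0) + e q 1 * starRingEnd ℂ (e q 1))
        = fun _ => (1 : ℂ) := by
      funext q; have h := hnorm q; simpa [dotc, Fin.sum_univ_two] using h
    have h2 : fderiv ℝ (fun q => e q 0 * starRingEnd ℂ (e q 0)
        + e q 1 * starRingEnd ℂ (e q 1)) p v = 0 := by
      rw [hfun]; simp
    rw [fderiv_add_apply' ((hee 0).fun_mul (hce 0)) ((hee 1).fun_mul (hce 1)) v,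
      fderiv_mul_apply (hee 0) (hce 0) v, fderiv_mul_apply (hee 1) (hce 1) v,
      fderiv_conj' _ p (hee 0) v, fderiv_conj' _ p (hee 1) v,
      fderiv_vcomp e p hed 0 v, fderiv_vcomp e p hed 1 v] at h2
    linear_combination h2
  have him : ((((fderiv ℝ e p (1, 0) 0 * starRingEnd ℂ (fderiv ℝ e p (0, 1) 0)
        + fderiv ℝ e p (1, 0) 1 * starRingEnd ℂ (fderiv ℝ e p (0, 1) 1)).im : ℝ)) : ℂ) * (2 * I)
      = fderiv ℝ e p (1, 0) 0 * starRingEnd ℂ (fderiv ℝ e p (0, 1) 0)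
        + fderiv ℝ e p (1, 0) 1 * starRingEnd ℂ (fderiv ℝ e p (0, 1) 1)
        - (starRingEnd ℂ (fderiv ℝ e p (1, 0) 0) * fderiv ℝ e p (0, 1) 0
          + starRingEnd ℂ (fderiv ℝ e p (1, 0) 1) * fderiv ℝ e p (0, 1) 1) := by
    have h := Complex.sub_conj (fderiv ℝ e p (1, 0) 0 * starRingEnd ℂ (fderiv ℝ e p (0, 1) 0)
        + fderiv ℝ e p (1, 0) 1 * starRingEnd ℂ (fderiv ℝ e p (0, 1) 1))
    have h3 : ((((fderiv ℝ e p (1, 0) 0 * starRingEnd ℂ (fderiv ℝ e p (0, 1) 0)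
        + fderiv ℝ e p (1, 0) 1 * starRingEnd ℂ (fderiv ℝ e p (0, 1) 1)).im : ℝ)) : ℂ) * (2 * I)
        = (fderiv ℝ e p (1, 0) 0 * starRingEnd ℂ (fderiv ℝ e p (0, 1) 0)
          + fderiv ℝ e p (1, 0) 1 * starRingEnd ℂ (fderiv ℝ e p (0, 1) 1))
          - starRingEnd ℂ (fderiv ℝ e p (1, 0) 0 * starRingEnd ℂ (fderiv ℝ e p (0, 1) 0)
            + fderiv ℝ e p (1, 0) 1 * starRingEnd ℂ (fderiv ℝ e p (0, 1) 1)) := by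
      rw [h]; push_cast; ring
    rw [h3]
    simp only [map_add, _root_.map_mul, Complex.conj_conj]
    try ring
  simp only [pbMM, pbMV, pbSV, dotc, Matrix.add_apply, Matrix.sub_apply, Matrix.mul_apply,
    Matrix.mulVec, dotProduct, Fin.sum_univ_two, Matrix.conjTranspose_apply,
    Pi.sub_apply, Pi.smul_apply, Complex.real_smul, smul_eq_mul, hUcol, hUH, hHUv, hHmu,
    hc, RCLike.star_def, Matrix.one_apply, one_div, mul_inv, Complex.inv_I]
  simp only [Fin.reduceEq, reduceIte, mul_zero, zero_mul, mul_one, add_zero, zero_add, sub_zero]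
  linear_combination
    (-I / 2) * (starRingEnd ℂ (fderiv ℝ e p (0, 1) 0) * hEig (1, 0) 0
      + starRingEnd ℂ (fderiv ℝ e p (0, 1) 1) * hEig (1, 0) 1
      - starRingEnd ℂ (fderiv ℝ e p (1, 0) 0) * hEig (0, 1) 0
      - starRingEnd ℂ (fderiv ℝ e p (1, 0) 1) * hEig (0, 1) 1
      + ((fderiv ℝ μ p (1, 0) : ℝ) : ℂ) * hNorm (0, 1)
      - ((fderiv ℝ μ p (0, 1) : ℝ) : ℂ) * hNorm (1, 0))
    + ((μ p : ℂ) * I / 2) * him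
    - (μ p : ℂ) * (((fderiv ℝ e p (1, 0) 0 * starRingEnd ℂ (fderiv ℝ e p (0, 1) 0)
        + fderiv ℝ e p (1, 0) 1 * starRingEnd ℂ (fderiv ℝ e p (0, 1) 1)).im : ℂ)) * Complex.I_sq
end
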